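/- arXiv:1910.08932 — 2 statements merged into one kernel-verified Lean document; each statement's English description precedes it below -/
import Mathlib

section
/- Multiplicativity of u: suppose a, b, c, d are integers with b, d > 0, gcd(b,d) = 1, ab even, and cd even. Then u(a/b + c/d) = u(a/b)·u(c/d), where u(p/q) = (1/(2q))·Σ_{x=0}^{2q-1} exp(πi p x²/q) for p/q in lowest terms with q > 0. -/
open Finset

/-- `u(r) = (1/(2q))·Σ_{x=0}^{2q-1} exp(πi·p·x²/q)` where `r = p/q` in lowest terms
with `q > 0` (well-defined on ℚ by invariance under common scaling). -/
noncomputable def u (r : ℚ) : ℂ :=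
  (1 / (2 * (r.den : ℂ))) * ∑ x ∈ Finset.range (2 * r.den),
    Complex.exp (Real.pi * Complex.I * r.num * (x : ℂ) ^ 2 / r.den)

/-!
Since `(a d + c b) / (b d) = a / b + c / d`, every term `exp (π i (a d + c b) x² / (b d))` of the
sum defining `u (a / b + c / d)` factors as `exp (π i a x² / b) · exp (π i c x² / d)`. As `a b` is
even, the first factor depends only on `x mod b` (not merely `x mod 2 b`), and likewise the second
only on `x mod d`. So all three sums are twice their sums over a single period, and the Chinese
remainder theorem `ZMod (b d) ≃ ZMod b × ZMod d` splits the sum over `x mod b d` into the product.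
The invariance `U (k p) (k q) = U p q` is what lets `u` be evaluated at unreduced fractions.
-/

open Function Complex

theorem Finset.sum_range_eq_sum_zmod_val {M : Type*} [AddCommMonoid M] (n : ℕ) [NeZero n]
    (f : ℕ → M) : ∑ x ∈ range n, f x = ∑ x : ZMod n, f x.val := by
  refine sum_nbij' (fun x => (x : ZMod n)) ZMod.val (by simp) (by simp [ZMod.val_lt])
    (fun x hx => ZMod.val_cast_of_lt (mem_range.mp hx)) (fun x _ => by simp) fun x hx => ?_
  rw [ZMod.val_cast_of_lt (mem_range.mp hx)]

theorem Function.Periodic.sum_range_mul {M : Type*} [AddCommMonoid M] {f : ℕ → M} {n : ℕ}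
    (hf : Periodic f n) (k : ℕ) : ∑ x ∈ range (k * n), f x = k • ∑ x ∈ range n, f x := by
  induction k with
  | zero => simp
  | succ k ih =>
    rw [add_mul, one_mul, sum_range_add, ih, succ_nsmul]
    congr 1
    refine sum_congr rfl fun x _ => ?_
    rw [add_comm]; exact hf.nat_mul k x

theorem Function.Periodic.sum_range_mul_mul_of_coprime {R : Type*} [CommSemiring R]
    {f g : ℕ → R} {m n : ℕ} [NeZero m] [NeZero n] (hf : Periodic f m) (hg : Periodic g n)
    (hmn : m.Coprime n) :
    ∑ x ∈ range (m * n), f x * g x = (∑ x ∈ range m, f x) * ∑ x ∈ range n, g x := by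
  simp only [sum_range_eq_sum_zmod_val, sum_mul_sum, ← Fintype.sum_prod_type']
  refine Fintype.sum_equiv (ZMod.chineseRemainder hmn).toEquiv _ _ fun x => ?_
  show f x.val * g x.val =
    f (ZMod.cast x : ZMod m × ZMod n).1.val * g (ZMod.cast x : ZMod m × ZMod n).2.val
  rw [Prod.fst_zmod_cast, Prod.snd_zmod_cast, ZMod.cast_eq_val, ZMod.cast_eq_val,
    ZMod.val_natCast, ZMod.val_natCast, hf.map_mod_nat, hg.map_mod_nat]

noncomputable def quadExp (p : ℤ) (q x : ℕ) : ℂ :=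
  exp (Real.pi * I * p * (x : ℂ) ^ 2 / q)

theorem quadExp_add_mul {p : ℤ} {q : ℕ} (hq : q ≠ 0) {k : ℕ} (hk : Even (p * q * k)) (x : ℕ) :
    quadExp p q (x + k * q) = quadExp p q x := by
  obtain ⟨m, hm⟩ := hk
  have hqC : (q : ℂ) ≠ 0 := Nat.cast_ne_zero.mpr hq
  have hmC : (p : ℂ) * q * k = m + m := by exact_mod_cast hm
  unfold quadExp
  -- `p (x + k q)² / q = p x² / q + 2 (p x k + m k)` because `p q k = 2 m`
  rw [← mul_one (exp (Real.pi * I * p * (x : ℂ) ^ 2 / q)),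
    ← exp_int_mul_two_pi_mul_I (p * x * k + m * k), ← exp_add]
  congr 1
  push_cast
  field_simp
  linear_combination (k * q : ℂ) * hmC

theorem quadExp_mul_left {k : ℕ} (hk : k ≠ 0) (p : ℤ) (q : ℕ) :
    quadExp (k * p) (k * q) = quadExp p q := by
  funext x
  have hkC : (k : ℂ) ≠ 0 := Nat.cast_ne_zero.mpr hk
  unfold quadExp
  congr 1
  push_cast
  field_simp

theorem quadExp_add_div (a c : ℤ) {b d : ℕ} (hb : b ≠ 0) (hd : d ≠ 0) (x : ℕ) :
    quadExp (a * d + c * b) (b * d) x = quadExp a b x * quadExp c d x := by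
  have hbC : (b : ℂ) ≠ 0 := Nat.cast_ne_zero.mpr hb
  have hdC : (d : ℂ) ≠ 0 := Nat.cast_ne_zero.mpr hd
  unfold quadExp
  rw [← exp_add]
  congr 1
  push_cast
  field_simp

theorem quadExp_periodic_of_even {p : ℤ} {q : ℕ} (hq : q ≠ 0) (hpq : Even (p * q)) :
    Periodic (quadExp p q) q := by
  simpa using quadExp_add_mul hq (k := 1) (by simpa using hpq)

theorem quadExp_periodic {p : ℤ} {q : ℕ} (hq : q ≠ 0) : Periodic (quadExp p q) (2 * q) :=
  quadExp_add_mul hq (by simp)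

noncomputable def U (p : ℤ) (q : ℕ) : ℂ :=
  (∑ x ∈ range (2 * q), quadExp p q x) / (2 * q)

theorem u_eq_U (r : ℚ) : u r = U r.num r.den := by
  simp [u, U, quadExp, div_eq_inv_mul]

theorem U_mul_left {k : ℕ} (hk : k ≠ 0) (p : ℤ) {q : ℕ} (hq : q ≠ 0) :
    U (k * p) (k * q) = U p q := by
  have hkC : (k : ℂ) ≠ 0 := Nat.cast_ne_zero.mpr hk
  rw [U, U, quadExp_mul_left hk, mul_left_comm, (quadExp_periodic hq).sum_range_mul, nsmul_eq_mul]
  push_cast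
  rw [mul_left_comm, mul_div_mul_left _ _ hkC]

theorem u_intCast_div_natCast (p : ℤ) {q : ℕ} (hq : q ≠ 0) : u (p / q) = U p q := by
  obtain ⟨c, hp, hq'⟩ :=
    Rat.exists_eq_mul_div_num_and_eq_mul_div_den p (Int.natCast_ne_zero.mpr hq)
  set r : ℚ := p / (q : ℤ)
  have hc : 0 < c := pos_of_mul_pos_left (hq' ▸ Int.natCast_pos.mpr (Nat.pos_of_ne_zero hq))
    (Int.natCast_nonneg _)
  lift c to ℕ using hc.le
  have hq'' : q = c * r.den := by exact_mod_cast hq'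
  rw [show (p : ℚ) / q = r by simp [r], u_eq_U, hp, hq'',
    U_mul_left (by exact_mod_cast hc.ne') _ r.den_ne_zero]

theorem U_eq_of_even {p : ℤ} {q : ℕ} (hq : q ≠ 0) (hpq : Even (p * q)) :
    U p q = (∑ x ∈ range q, quadExp p q x) / q := by
  have hqC : (q : ℂ) ≠ 0 := Nat.cast_ne_zero.mpr hq
  rw [U, (quadExp_periodic_of_even hq hpq).sum_range_mul, nsmul_eq_mul]
  push_cast
  field_simp

theorem U_add_div {a c : ℤ} {b d : ℕ} (hb : b ≠ 0) (hd : d ≠ 0) (hbd : b.Coprime d)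
    (hab : Even (a * b)) (hcd : Even (c * d)) :
    U (a * d + c * b) (b * d) = U a b * U c d := by
  have : NeZero b := ⟨hb⟩
  have : NeZero d := ⟨hd⟩
  have hP : Even ((a * d + c * b) * (b * d : ℕ)) := by
    push_cast
    have : (a * d + c * b) * (b * d) = a * b * d ^ 2 + c * d * b ^ 2 := by ring
    rw [this]
    exact (hab.mul_right _).add (hcd.mul_right _)
  rw [U_eq_of_even (mul_ne_zero hb hd) hP, U_eq_of_even hb hab, U_eq_of_even hd hcd]
  simp only [quadExp_add_div a c hb hd]
  rw [(quadExp_periodic_of_even hb hab).sum_range_mul_mul_of_coprime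
    (quadExp_periodic_of_even hd hcd) hbd]
  push_cast
  ring

/-- Multiplicativity of `u`: if `b, d > 0`, `gcd(b,d) = 1`, `ab` even and `cd` even,
then `u(a/b + c/d) = u(a/b)·u(c/d)`. -/
theorem u_mul (a b c d : ℤ) (hb : 0 < b) (hd : 0 < d) (hbd : Int.gcd b d = 1)
    (hab : Even (a * b)) (hcd : Even (c * d)) :
    u ((a : ℚ) / b + (c : ℚ) / d) = u ((a : ℚ) / b) * u ((c : ℚ) / d) := by
  lift b to ℕ using hb.le
  lift d to ℕ using hd.le
  have hb0 : b ≠ 0 := by exact_mod_cast hb.ne'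
  have hd0 : d ≠ 0 := by exact_mod_cast hd.ne'
  have hsum : (a : ℚ) / b + (c : ℚ) / d = ((a * d + c * b : ℤ) : ℚ) / (b * d : ℕ) := by
    push_cast
    field_simp
  simp only [Int.cast_natCast] at hsum ⊢
  rw [hsum, u_intCast_div_natCast _ (mul_ne_zero hb0 hd0), u_intCast_div_natCast _ hb0,
    u_intCast_div_natCast _ hd0,
    U_add_div hb0 hd0 (by rwa [Int.gcd_natCast_natCast] at hbd) hab hcd]
end

section
/- Suppose p, q, r are integers with pqr nonzero and even, and gcd(q,r) = 1. Then u(pq/r)·u(pr/q) = u(p/(qr)), where u is the normalized quadratic Gauss sum function on ℚ. -/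
/-!
For `b > 0` and `ψ = ZMod.stdAddChar` on `ZMod (2b)`, `exp (π i a x² / b) = ψ (a x²)`, so
`2b · u (a / b)` is the quadratic Gauss sum `Σ_{x : ZMod (2b)} ψ (a x²)` of any representative
`a / b`. For coprime `q`, `r` the map `(v, w) ↦ r v + q w` from `ZMod (2q) × ZMod (2r)` onto
`ZMod (2qr)` is a surjective homomorphism with kernel of order `2`, and
`p (r v + q w)² ≡ p r² v² + p q² w² (mod 2qr)`, so the product of the Gauss sums for `pr / q`
and `pq / r` is twice the one for `p / (qr)`.
-/

open Finset

open Complex ZMod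

theorem AddMonoidHom.sum_comp_of_surjective {G H F M : Type*} [AddGroup G] [AddGroup H]
    [Fintype G] [Fintype H] [FunLike F G H] [AddMonoidHomClass F G H] [AddCommMonoid M] (φ : F)
    (hφ : Function.Surjective φ) (f : H → M) : ∑ g, f (φ g) = (Fintype.card G / Fintype.card H) • ∑ h, f h := by
  classical
  have hfiber (h : H) : #{g | φ g = h} = #{g | φ g = 0} :=
    AddMonoidHom.card_fiber_eq_of_mem_range φ (hφ h) ⟨0, map_zero φ⟩
  have hcard : Fintype.card G = Fintype.card H * #{g | φ g = 0} := by
    rw [← card_univ, card_eq_sum_card_fiberwise (f := φ) (t := univ) (by simp)]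
    simp [hfiber]
  rw [hcard, Nat.mul_div_cancel_left _ Fintype.card_pos, sum_comp, image_univ_of_surjective hφ,
    smul_sum]
  simp only [hfiber]

theorem sum_range_eq_sum_zmod {M : Type*} [AddCommMonoid M] (N : ℕ) [NeZero N] (f : ZMod N → M) :
    ∑ x ∈ range N, f x = ∑ x : ZMod N, f x :=
  sum_nbij' (fun x : ℕ => (x : ZMod N)) ZMod.val (by simp) (by simp [ZMod.val_lt])
    (fun x hx => ZMod.val_cast_of_lt (mem_range.1 hx)) (fun x _ => ZMod.natCast_zmod_val x)
    (fun _ _ => rfl)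

theorem ZMod.stdAddChar_intCast_eq_of_mul_eq {M N : ℕ} [NeZero M] [NeZero N] {i j : ℤ}
    (h : i * N = j * M) : stdAddChar (i : ZMod M) = stdAddChar (j : ZMod N) := by
  have hM : (M : ℂ) ≠ 0 := NeZero.ne _
  have hN : (N : ℂ) ≠ 0 := NeZero.ne _
  have h' : (i : ℂ) * N = j * M := by exact_mod_cast h
  rw [stdAddChar_coe, stdAddChar_coe]
  congr 1
  rw [div_eq_div_iff hM hN]
  linear_combination (2 * Real.pi * I) * h'

def zmodMulHom (k : ℕ) {m n : ℕ} (h : n ∣ k * m) : ZMod m →+ ZMod n :=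
  ZMod.lift m ⟨k • Int.castAddHom (ZMod n), by simpa using (natCast_eq_zero_iff _ _).2 h⟩

theorem zmodMulHom_intCast (k : ℕ) {m n : ℕ} (h : n ∣ k * m) (j : ℤ) :
    zmodMulHom k h j = k * j := by
  simp [zmodMulHom, nsmul_eq_mul]

noncomputable def quadGaussSum (a : ℤ) (N : ℕ) [NeZero N] : ℂ :=
  ∑ x : ZMod N, stdAddChar ((a : ZMod N) * x ^ 2)

theorem quadGaussSum_mul (a : ℤ) (k N : ℕ) [NeZero k] [NeZero N] :
    quadGaussSum (k * a) (k * N) = k * quadGaussSum a N := by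
  let ρ : ZMod (k * N) →+* ZMod N := castHom (dvd_mul_left N k) (ZMod N)
  have hterm (x : ZMod (k * N)) : stdAddChar (((k * a : ℤ) : ZMod (k * N)) * x ^ 2)
      = stdAddChar ((a : ZMod N) * ρ x ^ 2) := by
    obtain ⟨j, rfl⟩ := ZMod.intCast_surjective x
    rw [map_intCast, ← Int.cast_pow, ← Int.cast_mul, ← Int.cast_pow, ← Int.cast_mul]
    exact stdAddChar_intCast_eq_of_mul_eq (by push_cast; ring)
  unfold quadGaussSum
  rw [Fintype.sum_congr _ _ hterm, AddMonoidHom.sum_comp_of_surjective ρ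
    (castHom_surjective _) fun y => stdAddChar ((a : ZMod N) * y ^ 2)]
  simp [ZMod.card, Nat.mul_div_cancel _ (Nat.pos_of_neZero N), nsmul_eq_mul]

theorem quadGaussSum_mul_quadGaussSum (p : ℤ) {q r : ℕ} [NeZero q] [NeZero r]
    (hqr : q.Coprime r) :
    quadGaussSum (p * r) (2 * q) * quadGaussSum (p * q) (2 * r)
      = 2 * quadGaussSum p (2 * (q * r)) := by
  let φ : ZMod (2 * q) × ZMod (2 * r) →+ ZMod (2 * (q * r)) :=
    (zmodMulHom r ⟨1, by ring⟩).coprod (zmodMulHom q ⟨1, by ring⟩)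
  have hφ (v w : ℤ) : φ (v, w) = r * v + q * w := by
    simp [φ, zmodMulHom_intCast]
  have hsurj : Function.Surjective φ := by
    intro y
    obtain ⟨n, rfl⟩ := ZMod.intCast_surjective y
    obtain ⟨c, d, hcd⟩ := Nat.isCoprime_iff_coprime.2 hqr
    refine ⟨(((d * n : ℤ) : ZMod (2 * q)), ((c * n : ℤ) : ZMod (2 * r))), ?_⟩
    rw [hφ]
    exact_mod_cast congrArg Int.cast (by linear_combination n * hcd : r * (d * n) + q * (c * n) = n)
  have hterm (x : ZMod (2 * q) × ZMod (2 * r)) :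
      stdAddChar (((p * r : ℤ) : ZMod (2 * q)) * x.1 ^ 2)
        * stdAddChar (((p * q : ℤ) : ZMod (2 * r)) * x.2 ^ 2)
      = stdAddChar ((p : ZMod (2 * (q * r))) * φ x ^ 2) := by
    obtain ⟨v, w⟩ := x
    obtain ⟨v, rfl⟩ := ZMod.intCast_surjective v
    obtain ⟨w, rfl⟩ := ZMod.intCast_surjective w
    have h₁ : stdAddChar (((p * r : ℤ) : ZMod (2 * q)) * (v : ZMod (2 * q)) ^ 2)
        = stdAddChar (((p * r ^ 2 * v ^ 2 : ℤ) : ZMod (2 * (q * r)))) := by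
      rw [← Int.cast_pow, ← Int.cast_mul]
      exact stdAddChar_intCast_eq_of_mul_eq (by push_cast; ring)
    have h₂ : stdAddChar (((p * q : ℤ) : ZMod (2 * r)) * (w : ZMod (2 * r)) ^ 2)
        = stdAddChar (((p * q ^ 2 * w ^ 2 : ℤ) : ZMod (2 * (q * r)))) := by
      rw [← Int.cast_pow, ← Int.cast_mul]
      exact stdAddChar_intCast_eq_of_mul_eq (by push_cast; ring)
    rw [h₁, h₂, ← AddChar.map_add_eq_mul, hφ]
    have hzero : (2 * (q * r) : ZMod (2 * (q * r))) = 0 := by exact_mod_cast natCast_self _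
    congr 1
    push_cast
    linear_combination (-p * v * w : ZMod (2 * (q * r))) * hzero
  unfold quadGaussSum
  rw [Fintype.sum_mul_sum, ← Fintype.sum_prod_type', Fintype.sum_congr _ _ hterm,
    AddMonoidHom.sum_comp_of_surjective φ hsurj fun y => stdAddChar ((p : ZMod (2 * (q * r))) * y ^ 2)]
  have hcard : 2 * q * (2 * r) / (2 * (q * r)) = 2 := by
    rw [show 2 * q * (2 * r) = 2 * (2 * (q * r)) by ring, Nat.mul_div_cancel _ (Nat.pos_of_neZero _)]
  simp [ZMod.card, hcard, nsmul_eq_mul]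

instance Rat.neZero_den (t : ℚ) : NeZero t.den := ⟨t.den_nz⟩

theorem u_eq_quadGaussSum (t : ℚ) : u t = quadGaussSum t.num (2 * t.den) / (2 * t.den) := by
  have hterm (x : ℕ) : Complex.exp (Real.pi * I * t.num * (x : ℂ) ^ 2 / t.den)
      = stdAddChar ((t.num : ZMod (2 * t.den)) * (x : ZMod (2 * t.den)) ^ 2) := by
    have hden : (t.den : ℂ) ≠ 0 := NeZero.ne _
    rw [show (t.num : ZMod (2 * t.den)) * (x : ZMod (2 * t.den)) ^ 2
      = ((t.num * x ^ 2 : ℤ) : ZMod (2 * t.den)) by push_cast; ring, stdAddChar_coe]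
    congr 1
    push_cast
    field_simp
  unfold u quadGaussSum
  rw [sum_congr rfl fun x _ => hterm x, sum_range_eq_sum_zmod _
    fun y => stdAddChar ((t.num : ZMod (2 * t.den)) * y ^ 2)]
  ring

theorem u_intCast_div_natCast_s10 (a : ℤ) (b : ℕ) [NeZero b] :
    u (a / b) = quadGaussSum a (2 * b) / (2 * b) := by
  obtain ⟨c, ha, hb⟩ := Rat.exists_eq_mul_div_num_and_eq_mul_div_den a (d := b) (NeZero.ne _)
  simp only [Int.cast_natCast] at ha hb
  set t : ℚ := a / b
  lift c to ℕ using by nlinarith [Int.natCast_pos.2 (Nat.pos_of_neZero b), Int.natCast_pos.2 t.pos]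
  have hb' : 2 * b = c * (2 * t.den) := by zify; linear_combination 2 * hb
  have : NeZero c := ⟨by rintro rfl; exact NeZero.ne b (by simpa using hb)⟩
  have hc : (c : ℂ) ≠ 0 := NeZero.ne _
  calc u t = c * quadGaussSum t.num (2 * t.den) / (c * (2 * t.den)) := by
        rw [u_eq_quadGaussSum]; field_simp
    _ = quadGaussSum a (2 * b) / (2 * b) := by
        rw [← quadGaussSum_mul]
        congr 1
        · congr 1
          exacts [ha.symm, hb'.symm]
        · exact_mod_cast hb'.symm

theorem u_mul_u_of_coprime (p : ℤ) {q r : ℕ} [NeZero q] [NeZero r] (hqr : q.Coprime r) :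
    u (((p * q : ℤ) : ℚ) / r) * u (((p * r : ℤ) : ℚ) / q) = u (p / (q * r : ℕ)) := by
  have hq : (q : ℂ) ≠ 0 := NeZero.ne _
  have hr : (r : ℂ) ≠ 0 := NeZero.ne _
  rw [u_intCast_div_natCast_s10, u_intCast_div_natCast_s10, u_intCast_div_natCast_s10,
    div_mul_div_comm, mul_comm (quadGaussSum _ (2 * r)), quadGaussSum_mul_quadGaussSum p hqr]
  push_cast
  field_simp

theorem u_three_term_general (p q r : ℤ) (h0 : p * q * r ≠ 0)
    (hqr : Int.gcd q r = 1) :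
    u (((p * q : ℤ) : ℚ) / (r : ℚ)) * u (((p * r : ℤ) : ℚ) / (q : ℚ))
      = u ((p : ℚ) / ((q * r : ℤ) : ℚ)) := by
  have hq : q ≠ 0 := by rintro rfl; simp at h0
  have hr : r ≠ 0 := by rintro rfl; simp at h0
  obtain ⟨q, rfl | rfl⟩ := q.eq_nat_or_neg <;> obtain ⟨r, rfl | rfl⟩ := r.eq_nat_or_neg <;>
    have : NeZero q := ⟨by simpa using hq⟩ <;> have : NeZero r := ⟨by simpa using hr⟩ <;>
    replace hqr : q.Coprime r := by simpa using hqr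
  -- flipping the signs of `p` and of one of `q`, `r` changes none of the three fractions
  · simpa using u_mul_u_of_coprime p hqr
  · simpa [neg_div, div_neg] using u_mul_u_of_coprime (-p) hqr
  · simpa [neg_div, div_neg] using u_mul_u_of_coprime (-p) hqr
  · simpa [neg_div, div_neg] using u_mul_u_of_coprime p hqr

/-- If `pqr` is nonzero and even and `gcd(q,r) = 1`, then `u(pq/r)·u(pr/q) = u(p/(qr))`. -/
theorem u_three_term (p q r : ℤ) (h0 : p * q * r ≠ 0) (he : Even (p * q * r))
    (hqr : Int.gcd q r = 1) :
    u (((p * q : ℤ) : ℚ) / (r : ℚ)) * u (((p * r : ℤ) : ℚ) / (q : ℚ))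
      = u ((p : ℚ) / ((q * r : ℤ) : ℚ)) :=
  u_three_term_general p q r h0 hqr
end
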